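/- Let P be a Poisson algebra over a field 𝔽. Then for all x, y ∈ P, the eighth power {x,y}⁸ lies in δ₂(P)·P, the span of products of elements of the second derived subalgebra δ₂(P) = {{P,P},{P,P}} with elements of P. -/

import Mathlib

/-- A Poisson bracket on a commutative associative unital `F`-algebra `P`:
an `F`-bilinear, alternating bracket satisfying the Jacobi identity and the
Leibniz rule `{a·b, c} = a·{b,c} + b·{a,c}`. -/
structure PoissonBracket (F P : Type*) [Field F] [CommRing P] [Algebra F P] where
  bracket : P → P → P
  add_left : ∀ a b c : P, bracket (a + b) c = bracket a c + bracket b c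
  smul_left : ∀ (r : F) (a b : P), bracket (r • a) b = r • bracket a b
  add_right : ∀ a b c : P, bracket a (b + c) = bracket a b + bracket a c
  smul_right : ∀ (r : F) (a b : P), bracket a (r • b) = r • bracket a b
  alt : ∀ a : P, bracket a a = 0
  jacobi : ∀ a b c : P,
    bracket (bracket a b) c + bracket (bracket b c) a + bracket (bracket c a) b = 0
  leibniz : ∀ a b c : P, bracket (a * b) c = a * bracket b c + b * bracket a c

namespace PoissonBracket

variable {F P : Type*} [Field F] [CommRing P] [Algebra F P]

/-- `{A, B}`: the `F`-span of all brackets of elements of `A` with elements of `B`. -/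
def lieSpan (pb : PoissonBracket F P) (A B : Submodule F P) : Submodule F P :=
  Submodule.span F {z : P | ∃ a ∈ A, ∃ b ∈ B, z = pb.bracket a b}

/-- Upper derived series: `δ̃₀(P) = P`, `δ̃ₙ₊₁(P) = {δ̃ₙ(P), δ̃ₙ(P)}·P`. -/
def udelta (pb : PoissonBracket F P) : ℕ → Submodule F P
  | 0 => ⊤
  | n + 1 => pb.lieSpan (pb.udelta n) (pb.udelta n) * ⊤

/-- Derived series of a Lie ideal `I`: `δ₀(I) = I`, `δₙ₊₁(I) = {δₙ(I), δₙ(I)}`. -/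
def dseries (pb : PoissonBracket F P) (I : Submodule F P) : ℕ → Submodule F P
  | 0 => I
  | n + 1 => pb.lieSpan (pb.dseries I n) (pb.dseries I n)

/-- Lower central series of a Lie ideal `I`, indexed so that `lcs I 1 = γ₁(I) = I`
and `lcs I (n+1) = γₙ₊₁(I) = {γₙ(I), I}` for `n ≥ 1` (index `0` is a dummy equal to `I`). -/
def lcs (pb : PoissonBracket F P) (I : Submodule F P) : ℕ → Submodule F P
  | 0 => I
  | 1 => I
  | n + 2 => pb.lieSpan (pb.lcs I (n + 1)) I

/-- Upper Lie power series: `P⁽¹⁾ = P`, `P⁽ⁿ⁾ = {P⁽ⁿ⁻¹⁾, P}·P` for `n > 1`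
(index `0` is a dummy equal to `P`). -/
def ulps (pb : PoissonBracket F P) : ℕ → Submodule F P
  | 0 => ⊤
  | 1 => ⊤
  | n + 2 => pb.lieSpan (pb.ulps (n + 1)) ⊤ * ⊤

/-- A Poisson ideal: an ideal for the associative product which is also a Lie ideal. -/
def IsPoissonIdeal (pb : PoissonBracket F P) (I : Submodule F P) : Prop :=
  (∀ x ∈ I, ∀ p : P, p * x ∈ I) ∧ (∀ x ∈ I, ∀ p : P, pb.bracket x p ∈ I)

/-- The Poisson ideal generated by a set `S`: the smallest Poisson ideal containing `S`. -/
def poissonSpan (pb : PoissonBracket F P) (S : Set P) : Submodule F P :=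
  sInf {I : Submodule F P | pb.IsPoissonIdeal I ∧ S ⊆ I}

end PoissonBracket

open PoissonBracket

/-!
Write `u = {x,y}`. By the Leibniz rule `x·u = {x, xy}` and `y·u = {xy, y}` lie in `δ₁(P)`, so
`d = {xu, yu} ∈ δ₂(P)`, and expanding `d` gives `u³ = d - u·v` with `v = y{x,u} - x{y,u}`.
Every product `{a,c}{b,c}` with `c ∈ δ₁(P)` lies in `δ₂(P)·P`, since expanding `{c, {a, bc}}`
writes it as a combination of brackets of `c` with brackets. Hence `v² ∈ δ₂(P)·P`, and therefore
so are `u⁶ = d(d - 2uv) + u²v²` and `u⁸ = u²·u⁶`.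
-/

namespace Submodule

variable {F P : Type*} [Field F] [CommRing P] [Algebra F P] {I : Submodule F P}

theorem mem_mul_top_of_mem {a : P} (ha : a ∈ I) : a ∈ I * ⊤ := by
  simpa using mul_mem_mul ha (mem_top (x := (1 : P)))

theorem mul_mem_mul_top (p : P) {m : P} (hm : m ∈ I * ⊤) : p * m ∈ I * ⊤ := by
  have h : p * m ∈ ⊤ * (I * ⊤) := mul_mem_mul mem_top hm
  rw [Submodule.mul_comm, mul_assoc] at h
  exact mul_le_mul_right (le_top : (⊤ : Submodule F P) * ⊤ ≤ ⊤) I h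

end Submodule

namespace PoissonBracket

variable {F P : Type*} [Field F] [CommRing P] [Algebra F P] (pb : PoissonBracket F P)

theorem bracket_anticomm (a b : P) : pb.bracket a b = -pb.bracket b a := by
  have h := pb.alt (a + b)
  rw [pb.add_left, pb.add_right, pb.add_right, pb.alt, pb.alt] at h
  linear_combination h

theorem bracket_mul_right (a b c : P) :
    pb.bracket a (b * c) = b * pb.bracket a c + c * pb.bracket a b := by
  linear_combination pb.bracket_anticomm a (b * c) - pb.leibniz b c a -
    b * pb.bracket_anticomm a c - c * pb.bracket_anticomm a b

theorem bracket_self_mul (a b : P) : pb.bracket a (a * b) = a * pb.bracket a b := by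
  linear_combination pb.bracket_mul_right a a b + b * pb.alt a

theorem bracket_mul_self (a b : P) : pb.bracket (a * b) b = b * pb.bracket a b := by
  linear_combination pb.leibniz a b b + a * pb.alt b

theorem bracket_mul_mul_right (a b c : P) :
    pb.bracket (a * c) (b * c) =
      c * (b * pb.bracket a c - a * pb.bracket b c) + c ^ 2 * pb.bracket a b := by
  linear_combination pb.leibniz a c (b * c) + a * pb.bracket_mul_right c b c +
    c * pb.bracket_mul_right a b c + a * b * pb.alt c + a * c * pb.bracket_anticomm c b

theorem bracket_mem_lieSpan {A B : Submodule F P} {a b : P} (ha : a ∈ A) (hb : b ∈ B) :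
    pb.bracket a b ∈ pb.lieSpan A B :=
  Submodule.subset_span ⟨a, ha, b, hb, rfl⟩

theorem bracket_mem_dseries_one (a b : P) : pb.bracket a b ∈ pb.dseries ⊤ 1 :=
  pb.bracket_mem_lieSpan Submodule.mem_top Submodule.mem_top

theorem bracket_mul_bracket_mem_dseries_two_mul_top (a b : P) {c : P}
    (hc : c ∈ pb.dseries ⊤ 1) :
    pb.bracket a c * pb.bracket b c ∈ pb.dseries ⊤ 2 * ⊤ := by
  have hmem : ∀ p q : P, pb.bracket c (pb.bracket p q) ∈ pb.dseries ⊤ 2 * ⊤ := fun p q =>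
    Submodule.mem_mul_top_of_mem (pb.bracket_mem_lieSpan hc (pb.bracket_mem_dseries_one p q))
  have key : pb.bracket a c * pb.bracket b c =
      b * pb.bracket c (pb.bracket a c) + c * pb.bracket c (pb.bracket a b) -
        pb.bracket c (pb.bracket a (b * c)) := by
    rw [pb.bracket_mul_right, pb.add_right, pb.bracket_mul_right, pb.bracket_mul_right, pb.alt]
    linear_combination pb.bracket a c * pb.bracket_anticomm b c
  rw [key]
  exact sub_mem (add_mem (Submodule.mul_mem_mul_top _ (hmem _ _))
    (Submodule.mul_mem_mul_top _ (hmem _ _))) (hmem _ _)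

theorem bracket_pow_six_mem_dseries_two_mul_top (x y : P) :
    pb.bracket x y ^ 6 ∈ pb.dseries ⊤ 2 * ⊤ := by
  set u := pb.bracket x y
  set d := pb.bracket (x * u) (y * u)
  set v := y * pb.bracket x u - x * pb.bracket y u
  have hu : u ∈ pb.dseries ⊤ 1 := pb.bracket_mem_dseries_one x y
  have hd : d ∈ pb.dseries ⊤ 2 := by
    refine pb.bracket_mem_lieSpan ?_ ?_
    · simpa only [pb.bracket_self_mul] using pb.bracket_mem_dseries_one x (x * y)
    · simpa only [pb.bracket_mul_self] using pb.bracket_mem_dseries_one (x * y) y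
  have hv : v ^ 2 ∈ pb.dseries ⊤ 2 * ⊤ := by
    have hsq : v ^ 2 = y ^ 2 * (pb.bracket x u * pb.bracket x u)
        - 2 * x * y * (pb.bracket x u * pb.bracket y u)
        + x ^ 2 * (pb.bracket y u * pb.bracket y u) := by ring
    rw [hsq]
    exact add_mem
      (sub_mem (Submodule.mul_mem_mul_top _ (pb.bracket_mul_bracket_mem_dseries_two_mul_top x x hu))
        (Submodule.mul_mem_mul_top _ (pb.bracket_mul_bracket_mem_dseries_two_mul_top x y hu)))
      (Submodule.mul_mem_mul_top _ (pb.bracket_mul_bracket_mem_dseries_two_mul_top y y hu))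
  have hcube : u ^ 3 = d - u * v := by
    simp only [d, v, pb.bracket_mul_mul_right]
    ring
  have hsix : u ^ 6 = d * (d - 2 * u * v) + u ^ 2 * v ^ 2 := by
    rw [show u ^ 6 = (u ^ 3) ^ 2 by ring, hcube]
    ring
  rw [hsix]
  exact add_mem (Submodule.mul_mem_mul hd Submodule.mem_top) (Submodule.mul_mem_mul_top _ hv)

end PoissonBracket

/-- For all `x, y ∈ P`, `{x,y}⁸ ∈ δ₂(P)·P`. -/
theorem bracket_pow_eight_mem_dseries_two_mul_top
    {F P : Type*} [Field F] [CommRing P] [Algebra F P]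
    (pb : PoissonBracket F P) (x y : P) :
    pb.bracket x y ^ 8 ∈ pb.dseries ⊤ 2 * (⊤ : Submodule F P) := by
  rw [show pb.bracket x y ^ 8 = pb.bracket x y ^ 2 * pb.bracket x y ^ 6 by ring]
  exact Submodule.mul_mem_mul_top _ (pb.bracket_pow_six_mem_dseries_two_mul_top x y)
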